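/- arXiv:math/9811161 — 4 statements merged into one kernel-verified Lean document; each statement's English description precedes it below -/
import Mathlib

section
/- Let w be a smooth periodic function on Ω_ε=[0,l₁]×[0,l₂]×[0,ε] with Fourier coefficients ŵ(m,n,p) vanishing for p=0 (i.e., Qw=w, meaning w has zero average in the third variable). Then ‖w‖_{L^∞} ≤ c ε^{1/2} ‖D²w‖_{L²}, where c depends only on l₁, l₂, and D² is the Fourier multiplier with symbol (2π)²(m²/l₁²+n²/l₂²+p²/ε²). -/
open Real Finset

/-!
Every Fourier mode has modulus one, so `‖w‖_∞ ≤ ∑ |ŵ(k)|`. Writing `λ = m²/l₁² + n²/l₂² + p²/ε²`,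
Cauchy–Schwarz gives `∑ |ŵ| ≤ (∑_{p ≠ 0} λ⁻²)^{1/2} (∑ λ² |ŵ|²)^{1/2}`, and the second factor is
`‖D²w‖₂` up to `(2π)² (l₁ l₂ ε)^{1/2}`. For `p ≠ 0` we have
`λ² ≥ (m²/l₁² + p²/4ε²)(n²/l₂² + p²/4ε²)`, and since `ε < l₂/4 ≤ l₁/4` the shifts `p²/4ε²` are at
least `1/l₁²`, `1/l₂²`, so each one-dimensional sum is `∑_m (m²/l₁² + p²/4ε²)⁻¹ ≤ 16 l₁ ε/|p|`.
Hence `∑_{p ≠ 0} λ⁻² ≤ 256 l₁ l₂ ε² ∑ p⁻² ≤ 1024 l₁ l₂ ε²`, which yields the factor `ε^{1/2}`.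
-/

theorem Summable.of_nat_of_even {f : ℤ → ℝ} (hf : f.Even) (h : Summable fun n : ℕ => f n) :
    Summable f :=
  .of_nat_of_neg h (h.congr fun n => (hf n).symm)

theorem tsum_int_le_two_mul_tsum_nat {f : ℤ → ℝ} (hf : f.Even) (h0 : 0 ≤ f 0)
    (h : Summable fun n : ℕ => f n) : ∑' n : ℤ, f n ≤ 2 * ∑' n : ℕ, f n := by
  rw [h.tsum_of_nat_of_neg (h.congr fun n => (hf n).symm), tsum_congr fun n : ℕ => hf n]
  linarith

theorem inv_sq_add_sq_le_four_mul_sub_inv {a : ℝ} (ha : 1 ≤ a) (n : ℕ) :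
    ((n : ℝ) ^ 2 + a ^ 2)⁻¹ ≤ 4 * ((n + a)⁻¹ - (n + 1 + a)⁻¹) := by
  have hn : (0 : ℝ) ≤ n := n.cast_nonneg
  calc ((n : ℝ) ^ 2 + a ^ 2)⁻¹ ≤ ((n + a) * (n + 1 + a) / 4)⁻¹ :=
        inv_anti₀ (by positivity) (by nlinarith [sq_nonneg ((n : ℝ) - a)])
    _ = 4 * ((n + a)⁻¹ - (n + 1 + a)⁻¹) := by field_simp; ring

theorem sum_range_inv_sq_add_sq_le {a : ℝ} (ha : 1 ≤ a) (N : ℕ) :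
    ∑ n ∈ range N, ((n : ℝ) ^ 2 + a ^ 2)⁻¹ ≤ 4 / a := by
  calc ∑ n ∈ range N, ((n : ℝ) ^ 2 + a ^ 2)⁻¹
      ≤ ∑ n ∈ range N, 4 * ((n + a)⁻¹ - (n + 1 + a)⁻¹) :=
        sum_le_sum fun n _ => inv_sq_add_sq_le_four_mul_sub_inv ha n
    _ = 4 * (a⁻¹ - (N + a)⁻¹) := by
        have := sum_range_sub' (fun n : ℕ => ((n : ℝ) + a)⁻¹) N
        push_cast at this
        rw [← mul_sum, this, zero_add]
    _ ≤ 4 / a := by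
        have : 0 ≤ ((N : ℝ) + a)⁻¹ := by positivity
        rw [div_eq_mul_inv]; linarith

theorem summable_nat_inv_sq_add_sq {a : ℝ} (ha : 1 ≤ a) :
    Summable fun n : ℕ => ((n : ℝ) ^ 2 + a ^ 2)⁻¹ :=
  summable_of_sum_range_le (fun _ => by positivity) (sum_range_inv_sq_add_sq_le ha)

theorem summable_int_inv_sq_add_sq {a : ℝ} (ha : 1 ≤ a) :
    Summable fun m : ℤ => ((m : ℝ) ^ 2 + a ^ 2)⁻¹ :=
  .of_nat_of_even (fun m => by simp) (by simpa using summable_nat_inv_sq_add_sq ha)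

theorem tsum_int_inv_sq_add_sq_le {a : ℝ} (ha : 1 ≤ a) :
    ∑' m : ℤ, ((m : ℝ) ^ 2 + a ^ 2)⁻¹ ≤ 8 / a := by
  calc ∑' m : ℤ, ((m : ℝ) ^ 2 + a ^ 2)⁻¹ ≤ 2 * ∑' n : ℕ, ((n : ℝ) ^ 2 + a ^ 2)⁻¹ := by
        simpa using tsum_int_le_two_mul_tsum_nat (f := fun m : ℤ => ((m : ℝ) ^ 2 + a ^ 2)⁻¹)
          (fun m => by simp) (by positivity) (by simpa using summable_nat_inv_sq_add_sq ha)
    _ ≤ 2 * (4 / a) := by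
        gcongr
        exact Real.tsum_le_of_sum_range_le (fun _ => by positivity) (sum_range_inv_sq_add_sq_le ha)
    _ = 8 / a := by ring

theorem tsum_int_inv_sq_le_four : ∑' p : ℤ, ((p : ℝ) ^ 2)⁻¹ ≤ 4 := by
  have hzeta : HasSum (fun n : ℕ => ((n : ℝ) ^ 2)⁻¹) (π ^ 2 / 6) := by
    simpa using hasSum_zeta_two
  calc ∑' p : ℤ, ((p : ℝ) ^ 2)⁻¹ ≤ 2 * ∑' n : ℕ, ((n : ℝ) ^ 2)⁻¹ := by
        simpa using tsum_int_le_two_mul_tsum_nat (f := fun p : ℤ => ((p : ℝ) ^ 2)⁻¹)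
          (fun m => by simp) (by simp) (by simp [hzeta.summable])
    _ = π ^ 2 / 3 := by rw [hzeta.tsum_eq]; ring
    _ ≤ 4 := by nlinarith [pi_lt_d2, pi_pos]

theorem tsum_mul_le_sqrt_mul_sqrt {ι : Type*} {f g : ι → ℝ} (hf : ∀ i, 0 ≤ f i) (hg : ∀ i, 0 ≤ g i)
    (hf2 : Summable fun i => f i ^ 2) (hg2 : Summable fun i => g i ^ 2) :
    ∑' i, f i * g i ≤ √(∑' i, f i ^ 2) * √(∑' i, g i ^ 2) := by
  have := Real.inner_le_Lp_mul_Lq_tsum_of_nonneg Real.HolderConjugate.two_two hf hg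
    (by simpa using hf2) (by simpa using hg2)
  simpa [Real.sqrt_eq_rpow] using this

theorem norm_tsum_mul_le_tsum_norm {ι : Type*} {a u : ι → ℂ} (hu : ∀ i, ‖u i‖ = 1)
    (ha : Summable fun i => ‖a i‖) : ‖∑' i, a i * u i‖ ≤ ∑' i, ‖a i‖ := by
  have hnorm : ∀ i, ‖a i * u i‖ = ‖a i‖ := fun i => by rw [norm_mul, hu, mul_one]
  exact (norm_tsum_le_tsum_norm (ha.congr fun i => (hnorm i).symm)).trans_eq (tsum_congr hnorm)

theorem norm_exp_two_pi_I_mul_box_phase (l₁ l₂ ε x y z : ℝ) (k : ℤ × ℤ × ℤ) :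
    ‖Complex.exp (2 * (π : ℂ) * Complex.I *
      ((k.1 : ℂ) * (x : ℂ) / (l₁ : ℂ) + (k.2.1 : ℂ) * (y : ℂ) / (l₂ : ℂ) +
        (k.2.2 : ℂ) * (z : ℂ) / (ε : ℂ)))‖ = 1 := by
  rw [show 2 * (π : ℂ) * Complex.I *
      ((k.1 : ℂ) * (x : ℂ) / (l₁ : ℂ) + (k.2.1 : ℂ) * (y : ℂ) / (l₂ : ℂ) +
        (k.2.2 : ℂ) * (z : ℂ) / (ε : ℂ)) =
      ((2 * π * (k.1 * x / l₁ + k.2.1 * y / l₂ + k.2.2 * z / ε) : ℝ) : ℂ) * Complex.I by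
    push_cast; ring]
  exact Complex.norm_exp_ofReal_mul_I _

/-- `(2π)² boxSymbol l₁ l₂ ε` is the Fourier symbol of `D²` on `Ω_ε`. -/
noncomputable def boxSymbol (l₁ l₂ ε : ℝ) (k : ℤ × ℤ × ℤ) : ℝ :=
  (k.1 : ℝ) ^ 2 / l₁ ^ 2 + (k.2.1 : ℝ) ^ 2 / l₂ ^ 2 + (k.2.2 : ℝ) ^ 2 / ε ^ 2

/-- `boxSymbol⁻²` on the modes with `p ≠ 0`, the only ones a function with `Qw = w` carries. -/
noncomputable def boxSymbolInvSq (l₁ l₂ ε : ℝ) (k : ℤ × ℤ × ℤ) : ℝ :=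
  if k.2.2 = 0 then 0 else (boxSymbol l₁ l₂ ε k ^ 2)⁻¹

section BoxSymbol

variable {l₁ l₂ ε : ℝ}

theorem boxSymbol_nonneg (k : ℤ × ℤ × ℤ) : 0 ≤ boxSymbol l₁ l₂ ε k := by
  unfold boxSymbol
  positivity

theorem boxSymbolInvSq_nonneg (k : ℤ × ℤ × ℤ) : 0 ≤ boxSymbolInvSq l₁ l₂ ε k := by
  unfold boxSymbolInvSq
  split_ifs <;> positivity

theorem one_le_mul_abs_div_two_mul {l : ℝ} {p : ℤ} (hε : 0 < ε) (hl : 2 * ε ≤ l) (hp : p ≠ 0) :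
    1 ≤ l * |(p : ℝ)| / (2 * ε) := by
  have hp1 : (1 : ℝ) ≤ |(p : ℝ)| := by exact_mod_cast Int.one_le_abs hp
  rw [le_div_iff₀ (by positivity)]
  nlinarith

theorem boxSymbol_sq_inv_le (hl₁ : 0 < l₁) (hl₂ : 0 < l₂) (hε : 0 < ε) (m n : ℤ) {p : ℤ}
    (hp : p ≠ 0) :
    (boxSymbol l₁ l₂ ε (m, n, p) ^ 2)⁻¹ ≤
      l₁ ^ 2 * ((m : ℝ) ^ 2 + (l₁ * |(p : ℝ)| / (2 * ε)) ^ 2)⁻¹ *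
        (l₂ ^ 2 * ((n : ℝ) ^ 2 + (l₂ * |(p : ℝ)| / (2 * ε)) ^ 2)⁻¹) := by
  have split : ∀ {l : ℝ} (j : ℤ), 0 < l →
      l ^ 2 * ((j : ℝ) ^ 2 + (l * |(p : ℝ)| / (2 * ε)) ^ 2)⁻¹ =
        ((j : ℝ) ^ 2 / l ^ 2 + (p : ℝ) ^ 2 / (4 * ε ^ 2))⁻¹ := by
    intro l j hl
    rw [div_pow, mul_pow, sq_abs]
    field_simp
    ring
  rw [split m hl₁, split n hl₂, ← mul_inv, sq]
  have hquarter : (p : ℝ) ^ 2 / (4 * ε ^ 2) ≤ (p : ℝ) ^ 2 / ε ^ 2 := by gcongr; nlinarith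
  have hm : (0 : ℝ) ≤ (m : ℝ) ^ 2 / l₁ ^ 2 := by positivity
  have hn : (0 : ℝ) ≤ (n : ℝ) ^ 2 / l₂ ^ 2 := by positivity
  have hq : (0 : ℝ) ≤ (p : ℝ) ^ 2 / (4 * ε ^ 2) := by positivity
  refine inv_anti₀ (by positivity) (mul_le_mul ?_ ?_ (by positivity) ?_) <;>
    simp only [boxSymbol] <;> linarith

theorem summable_and_tsum_boxSymbolInvSq_slice_le (hl₁ : 0 < l₁) (hl₂ : 0 < l₂) (hε : 0 < ε)
    (h₁ : 2 * ε ≤ l₁) (h₂ : 2 * ε ≤ l₂) (p : ℤ) :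
    Summable (fun mn : ℤ × ℤ => boxSymbolInvSq l₁ l₂ ε (mn.1, mn.2, p)) ∧
      ∑' mn : ℤ × ℤ, boxSymbolInvSq l₁ l₂ ε (mn.1, mn.2, p) ≤
        256 * l₁ * l₂ * ε ^ 2 / (p : ℝ) ^ 2 := by
  rcases eq_or_ne p 0 with rfl | hp
  · simp [boxSymbolInvSq]
  set A := l₁ * |(p : ℝ)| / (2 * ε)
  set B := l₂ * |(p : ℝ)| / (2 * ε)
  have hA := one_le_mul_abs_div_two_mul hε h₁ hp
  have hB := one_le_mul_abs_div_two_mul hε h₂ hp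
  set u : ℤ → ℝ := fun m => l₁ ^ 2 * ((m : ℝ) ^ 2 + A ^ 2)⁻¹
  set v : ℤ → ℝ := fun n => l₂ ^ 2 * ((n : ℝ) ^ 2 + B ^ 2)⁻¹
  have hu : Summable u := (summable_int_inv_sq_add_sq hA).mul_left _
  have hv : Summable v := (summable_int_inv_sq_add_sq hB).mul_left _
  have huv : Summable fun mn : ℤ × ℤ => u mn.1 * v mn.2 :=
    hu.mul_of_nonneg hv (fun _ => by positivity) (fun _ => by positivity)
  have hle : ∀ mn : ℤ × ℤ, boxSymbolInvSq l₁ l₂ ε (mn.1, mn.2, p) ≤ u mn.1 * v mn.2 :=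
    fun mn => by simpa [boxSymbolInvSq, hp] using boxSymbol_sq_inv_le hl₁ hl₂ hε mn.1 mn.2 hp
  refine ⟨huv.of_nonneg_of_le (fun _ => boxSymbolInvSq_nonneg _) hle, ?_⟩
  calc ∑' mn : ℤ × ℤ, boxSymbolInvSq l₁ l₂ ε (mn.1, mn.2, p)
      ≤ ∑' mn : ℤ × ℤ, u mn.1 * v mn.2 :=
        (huv.of_nonneg_of_le (fun _ => boxSymbolInvSq_nonneg _) hle).tsum_le_tsum hle huv
    _ = (∑' m, u m) * ∑' n, v n := (hu.tsum_mul_tsum hv huv).symm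
    _ ≤ (l₁ ^ 2 * (8 / A)) * (l₂ ^ 2 * (8 / B)) := by
        rw [tsum_mul_left, tsum_mul_left]
        have hu0 : 0 ≤ ∑' m : ℤ, ((m : ℝ) ^ 2 + A ^ 2)⁻¹ := tsum_nonneg fun _ => by positivity
        exact mul_le_mul (by gcongr; exact tsum_int_inv_sq_add_sq_le hA)
          (by gcongr; exact tsum_int_inv_sq_add_sq_le hB) (by positivity) (by positivity)
    _ = 256 * l₁ * l₂ * ε ^ 2 / (p : ℝ) ^ 2 := by
        have : |(p : ℝ)| ≠ 0 := by positivity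
        simp only [A, B]
        field_simp
        rw [sq_abs]
        ring

theorem summable_and_tsum_boxSymbolInvSq_le (hl₁ : 0 < l₁) (hl₂ : 0 < l₂) (hε : 0 < ε)
    (h₁ : 2 * ε ≤ l₁) (h₂ : 2 * ε ≤ l₂) :
    Summable (boxSymbolInvSq l₁ l₂ ε) ∧
      ∑' k, boxSymbolInvSq l₁ l₂ ε k ≤ 1024 * l₁ * l₂ * ε ^ 2 := by
  let e : ℤ × (ℤ × ℤ) ≃ ℤ × ℤ × ℤ := (Equiv.prodComm ℤ (ℤ × ℤ)).trans (Equiv.prodAssoc ℤ ℤ ℤ)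
  have hslice := summable_and_tsum_boxSymbolInvSq_slice_le hl₁ hl₂ hε h₁ h₂
  have hmajor : Summable fun p : ℤ => 256 * l₁ * l₂ * ε ^ 2 / (p : ℝ) ^ 2 := by
    simpa only [mul_one_div] using
      (Real.summable_one_div_int_pow.mpr one_lt_two).mul_left (256 * l₁ * l₂ * ε ^ 2)
  have houter : Summable fun p : ℤ => ∑' mn : ℤ × ℤ, boxSymbolInvSq l₁ l₂ ε (mn.1, mn.2, p) :=
    hmajor.of_nonneg_of_le (fun _ => tsum_nonneg fun _ => boxSymbolInvSq_nonneg _)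
      fun p => (hslice p).2
  have hsum : Summable (boxSymbolInvSq l₁ l₂ ε ∘ e) :=
    (summable_prod_of_nonneg fun _ => boxSymbolInvSq_nonneg _).2 ⟨fun p => (hslice p).1, houter⟩
  refine ⟨e.summable_iff.1 hsum, ?_⟩
  calc ∑' k, boxSymbolInvSq l₁ l₂ ε k
      = ∑' p : ℤ, ∑' mn : ℤ × ℤ, boxSymbolInvSq l₁ l₂ ε (mn.1, mn.2, p) := by
        rw [← e.tsum_eq]
        exact hsum.tsum_prod' fun p => (hslice p).1
    _ ≤ ∑' p : ℤ, 256 * l₁ * l₂ * ε ^ 2 / (p : ℝ) ^ 2 :=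
        houter.tsum_le_tsum (fun p => (hslice p).2) hmajor
    _ = 256 * l₁ * l₂ * ε ^ 2 * ∑' p : ℤ, ((p : ℝ) ^ 2)⁻¹ := by
        simp only [div_eq_mul_inv, tsum_mul_left]
    _ ≤ 256 * l₁ * l₂ * ε ^ 2 * 4 := by gcongr; exact tsum_int_inv_sq_le_four
    _ = 1024 * l₁ * l₂ * ε ^ 2 := by ring

theorem norm_eq_sqrt_boxSymbolInvSq_mul (hε : 0 < ε) {k : ℤ × ℤ × ℤ} {a : ℂ}
    (ha : k.2.2 = 0 → a = 0) :
    ‖a‖ = √(boxSymbolInvSq l₁ l₂ ε k) * (boxSymbol l₁ l₂ ε k * ‖a‖) := by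
  by_cases hp : k.2.2 = 0
  · simp [ha hp]
  have hpos : 0 < boxSymbol l₁ l₂ ε k := by
    have : 0 < (k.2.2 : ℝ) ^ 2 / ε ^ 2 := by positivity
    unfold boxSymbol
    positivity
  rw [boxSymbolInvSq, if_neg hp, Real.sqrt_inv, Real.sqrt_sq hpos.le, inv_mul_cancel_left₀ hpos.ne']

theorem tsum_norm_le_sqrt_tsum_boxSymbolInvSq_mul (hε : 0 < ε) {a : ℤ × ℤ × ℤ → ℂ}
    (ha : ∀ m n : ℤ, a (m, n, 0) = 0) (hV : Summable (boxSymbolInvSq l₁ l₂ ε))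
    (hS : Summable fun k => boxSymbol l₁ l₂ ε k ^ 2 * ‖a k‖ ^ 2) :
    ∑' k, ‖a k‖ ≤
      √(∑' k, boxSymbolInvSq l₁ l₂ ε k) * √(∑' k, boxSymbol l₁ l₂ ε k ^ 2 * ‖a k‖ ^ 2) := by
  have hcoef : ∀ k, ‖a k‖ = √(boxSymbolInvSq l₁ l₂ ε k) * (boxSymbol l₁ l₂ ε k * ‖a k‖) :=
    fun ⟨m, n, _⟩ => norm_eq_sqrt_boxSymbolInvSq_mul hε fun hp => by subst hp; exact ha m n
  have hsqrt : ∀ k, √(boxSymbolInvSq l₁ l₂ ε k) ^ 2 = boxSymbolInvSq l₁ l₂ ε k :=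
    fun k => sq_sqrt (boxSymbolInvSq_nonneg k)
  calc ∑' k, ‖a k‖ = ∑' k, √(boxSymbolInvSq l₁ l₂ ε k) * (boxSymbol l₁ l₂ ε k * ‖a k‖) :=
        tsum_congr hcoef
    _ ≤ √(∑' k, √(boxSymbolInvSq l₁ l₂ ε k) ^ 2) *
          √(∑' k, (boxSymbol l₁ l₂ ε k * ‖a k‖) ^ 2) :=
        tsum_mul_le_sqrt_mul_sqrt (fun _ => sqrt_nonneg _)
          (fun k => mul_nonneg (boxSymbol_nonneg k) (norm_nonneg _))
          (by simpa only [hsqrt] using hV) (by simpa only [mul_pow] using hS)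
    _ = √(∑' k, boxSymbolInvSq l₁ l₂ ε k) * √(∑' k, boxSymbol l₁ l₂ ε k ^ 2 * ‖a k‖ ^ 2) := by
        simp only [hsqrt, mul_pow]

end BoxSymbol

/-- `‖w‖_∞ ≤ c ε^{1/2} ‖D²w‖₂` for periodic `w` on the thin box `Ω_ε` with `Qw = w`
(i.e. Fourier coefficients vanish for `p = 0`); `c` depends only on `l₁, l₂`. -/
theorem linf_bound_thin_domain (l₁ l₂ : ℝ) (hl₂ : 0 < l₂) (hl : l₂ ≤ l₁) :
    ∃ c : ℝ, 0 < c ∧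
      ∀ ε : ℝ, 0 < ε → ε < l₂ / 4 →
      ∀ (w : ℝ × ℝ × ℝ → ℂ) (what : ℤ × ℤ × ℤ → ℂ),
        (∀ m n : ℤ, what (m, n, 0) = 0) →
        (∀ x y z : ℝ, w (x, y, z) =
          ∑' k : ℤ × ℤ × ℤ, what k *
            Complex.exp (2 * (Real.pi : ℂ) * Complex.I *
              ((k.1 : ℂ) * (x : ℂ) / (l₁ : ℂ) + (k.2.1 : ℂ) * (y : ℂ) / (l₂ : ℂ) +
                (k.2.2 : ℂ) * (z : ℂ) / (ε : ℂ)))) →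
        Summable (fun k : ℤ × ℤ × ℤ => ‖what k‖) →
        Summable (fun k : ℤ × ℤ × ℤ =>
          ((k.1 : ℝ) ^ 2 / l₁ ^ 2 + (k.2.1 : ℝ) ^ 2 / l₂ ^ 2 + (k.2.2 : ℝ) ^ 2 / ε ^ 2) ^ 2 *
            ‖what k‖ ^ 2) →
        ∀ x y z : ℝ,
          ‖w (x, y, z)‖ ≤
            c * Real.sqrt ε * Real.sqrt ((2 * Real.pi) ^ 4 * (l₁ * l₂ * ε) *
              ∑' k : ℤ × ℤ × ℤ,
                ((k.1 : ℝ) ^ 2 / l₁ ^ 2 + (k.2.1 : ℝ) ^ 2 / l₂ ^ 2 +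
                    (k.2.2 : ℝ) ^ 2 / ε ^ 2) ^ 2 * ‖what k‖ ^ 2) := by
  refine ⟨32, by norm_num, fun ε hε hεl w what hQ hw habs hS x y z => ?_⟩
  have hl₁ : 0 < l₁ := hl₂.trans_le hl
  obtain ⟨hV, hVle⟩ := summable_and_tsum_boxSymbolInvSq_le hl₁ hl₂ hε (by linarith) (by linarith)
  change Summable fun k => boxSymbol l₁ l₂ ε k ^ 2 * ‖what k‖ ^ 2 at hS
  change _ ≤ _ * _ * √(_ * ∑' k, boxSymbol l₁ l₂ ε k ^ 2 * ‖what k‖ ^ 2)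
  set S := ∑' k, boxSymbol l₁ l₂ ε k ^ 2 * ‖what k‖ ^ 2
  have hS0 : 0 ≤ S := tsum_nonneg fun _ => by positivity
  have h2π : 1 ≤ (2 * π) ^ 4 := one_le_pow₀ (by linarith [pi_gt_three])
  calc ‖w (x, y, z)‖ ≤ ∑' k, ‖what k‖ := by
        rw [hw]
        exact norm_tsum_mul_le_tsum_norm (norm_exp_two_pi_I_mul_box_phase l₁ l₂ ε x y z) habs
    _ ≤ √(∑' k, boxSymbolInvSq l₁ l₂ ε k) * √S :=
        tsum_norm_le_sqrt_tsum_boxSymbolInvSq_mul hε hQ hV hS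
    _ ≤ √(1024 * l₁ * l₂ * ε ^ 2) * √S := by gcongr
    _ = √(1024 * ε * (l₁ * l₂ * ε * S)) := by
        rw [← sqrt_mul (by positivity)]
        ring_nf
    _ ≤ √(1024 * ε * ((2 * π) ^ 4 * (l₁ * l₂ * ε) * S)) := by
        rw [mul_assoc ((2 * π) ^ 4)]
        gcongr √(1024 * ε * ?_)
        exact le_mul_of_one_le_left (by positivity) h2π
    _ = 32 * √ε * √((2 * π) ^ 4 * (l₁ * l₂ * ε) * S) := by
        rw [sqrt_mul (by positivity), sqrt_mul (by norm_num),
          show √(1024 : ℝ) = 32 by rw [show (1024 : ℝ) = 32 ^ 2 by norm_num, sqrt_sq (by norm_num)]]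
end

section
/- For 0<ε≤1 and l₁,l₂≥ε, the lattice sum Σ_{(m,n,p)∈ℤ³, p≠0} (m²/l₁²+n²/l₂²+p²/ε²)^{-2} is at most c ε² for a constant c depending only on l₁ and l₂. -/
/-!
Since `(a + c)(b + c) ≤ (a + b + c)²` for nonnegative `a, b, c`, taking `c = p²/ε²` bounds each
term by a product, so for fixed `p ≠ 0` the sum over `(m, n)` factors into two one-dimensional
sums `∑ₘ (m²/L² + t²)⁻¹` with `t = |p|/ε ≥ 1`. Comparison with the telescoping series
`∑ ((n + s)(n + 1 + s))⁻¹ = s⁻¹` shows that each is `O(1/t) = O(ε/|p|)`, and what remains is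
`ε² ∑_{p ≠ 0} p⁻² = ε² π²/3`.
-/

open Real

lemma inv_add_add_sq_le_inv_mul_inv {K : Type*} [Field K] [LinearOrder K] [IsStrictOrderedRing K]
    {a b c : K} (ha : 0 ≤ a) (hb : 0 ≤ b) (hc : 0 < c) :
    (a + b + c)⁻¹ ^ 2 ≤ (a + c)⁻¹ * (b + c)⁻¹ := by
  rw [inv_pow, ← mul_inv]
  exact inv_anti₀ (by positivity) (by nlinarith [mul_nonneg ha hb])

lemma sum_range_inv_mul_add_one_le {s : ℝ} (hs : 0 < s) (N : ℕ) :
    ∑ n ∈ Finset.range N, (((n : ℝ) + s) * ((n : ℝ) + 1 + s))⁻¹ ≤ s⁻¹ := by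
  have telescope (n : ℕ) : (((n : ℝ) + s) * ((n : ℝ) + 1 + s))⁻¹
      = ((n : ℝ) + s)⁻¹ - (((n + 1 : ℕ) : ℝ) + s)⁻¹ := by
    push_cast
    field_simp
    ring
  rw [Finset.sum_congr rfl fun n _ => telescope n,
    Finset.sum_range_sub' (fun n : ℕ => ((n : ℝ) + s)⁻¹)]
  simp only [Nat.cast_zero, zero_add, sub_le_self_iff]
  positivity

lemma inv_add_one_sq_div_add_sq_le {L t : ℝ} (hL : 0 < L) (ht : 0 < t) (n : ℕ) :
    (((n : ℝ) + 1) ^ 2 / L ^ 2 + t ^ 2)⁻¹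
      ≤ 2 * L ^ 2 * (((n : ℝ) + L * t) * ((n : ℝ) + 1 + L * t))⁻¹ := by
  calc (((n : ℝ) + 1) ^ 2 / L ^ 2 + t ^ 2)⁻¹ = L ^ 2 / (((n : ℝ) + 1) ^ 2 + (L * t) ^ 2) := by
        field_simp
    _ ≤ 2 * L ^ 2 / (((n : ℝ) + L * t) * ((n : ℝ) + 1 + L * t)) := by
        rw [div_le_div_iff₀ (by positivity) (by positivity)]
        nlinarith [sq_nonneg ((n : ℝ) + 1 - L * t), mul_pos hL ht]
    _ = 2 * L ^ 2 * (((n : ℝ) + L * t) * ((n : ℝ) + 1 + L * t))⁻¹ := div_eq_mul_inv _ _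

lemma tsum_ofReal_inv_add_one_sq_div_add_sq_le {L t : ℝ} (hL : 0 < L) (ht : 0 < t) :
    ∑' n : ℕ, ENNReal.ofReal ((((n : ℝ) + 1) ^ 2 / L ^ 2 + t ^ 2)⁻¹)
      ≤ ENNReal.ofReal (2 * L / t) := by
  refine ENNReal.tsum_le_of_sum_range_le fun N => ?_
  rw [← ENNReal.ofReal_sum_of_nonneg fun n _ => by positivity]
  refine ENNReal.ofReal_le_ofReal ?_
  calc ∑ n ∈ Finset.range N, (((n : ℝ) + 1) ^ 2 / L ^ 2 + t ^ 2)⁻¹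
      ≤ ∑ n ∈ Finset.range N, 2 * L ^ 2 * (((n : ℝ) + L * t) * ((n : ℝ) + 1 + L * t))⁻¹ :=
        Finset.sum_le_sum fun n _ => inv_add_one_sq_div_add_sq_le hL ht n
    _ ≤ 2 * L ^ 2 * (L * t)⁻¹ := by
        rw [← Finset.mul_sum]
        gcongr
        exact sum_range_inv_mul_add_one_le (by positivity) N
    _ = 2 * L / t := by field_simp

lemma ENNReal.tsum_int_eq_zero_add_two_mul_tsum_nat_add_one {f : ℤ → ENNReal}
    (hf : ∀ n, f (-n) = f n) :
    ∑' n : ℤ, f n = f 0 + 2 * ∑' n : ℕ, f (n + 1) := by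
  rw [tsum_of_add_one_of_neg_add_one ENNReal.summable ENNReal.summable]
  simp only [hf]
  ring

lemma tsum_int_ofReal_inv_sq_div_add_sq_le {L t : ℝ} (hL : 0 < L) (ht : 1 ≤ t) :
    ∑' m : ℤ, ENNReal.ofReal (((m : ℝ) ^ 2 / L ^ 2 + t ^ 2)⁻¹)
      ≤ ENNReal.ofReal ((1 + 4 * L) / t) := by
  have ht₀ : 0 < t := by linarith
  rw [ENNReal.tsum_int_eq_zero_add_two_mul_tsum_nat_add_one fun m => by push_cast; rw [neg_sq]]
  push_cast
  calc ENNReal.ofReal ((0 ^ 2 / L ^ 2 + t ^ 2)⁻¹)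
        + 2 * ∑' n : ℕ, ENNReal.ofReal ((((n : ℝ) + 1) ^ 2 / L ^ 2 + t ^ 2)⁻¹)
      ≤ ENNReal.ofReal t⁻¹ + ENNReal.ofReal 2 * ENNReal.ofReal (2 * L / t) := by
        rw [ENNReal.ofReal_ofNat]
        gcongr
        · rw [zero_pow two_ne_zero, zero_div, zero_add]
          nlinarith
        · exact tsum_ofReal_inv_add_one_sq_div_add_sq_le hL ht₀
    _ = ENNReal.ofReal ((1 + 4 * L) / t) := by
        rw [← ENNReal.ofReal_mul zero_le_two, ← ENNReal.ofReal_add (by positivity) (by positivity)]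
        congr 1
        ring

lemma tsum_int_ofReal_inv_sq_div_add_sq_div_le {L ε : ℝ} (hL : 0 < L) (hε : 0 < ε) (hε₁ : ε ≤ 1)
    {p : ℤ} (hp : p ≠ 0) :
    ∑' m : ℤ, ENNReal.ofReal (((m : ℝ) ^ 2 / L ^ 2 + (p : ℝ) ^ 2 / ε ^ 2)⁻¹)
      ≤ ENNReal.ofReal ((1 + 4 * L) * ε / |(p : ℝ)|) := by
  have hp₁ : 1 ≤ |(p : ℝ)| := by exact_mod_cast Int.one_le_abs hp
  have hsq : (p : ℝ) ^ 2 / ε ^ 2 = (|(p : ℝ)| / ε) ^ 2 := by rw [div_pow, sq_abs]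
  simp only [hsq]
  convert tsum_int_ofReal_inv_sq_div_add_sq_le hL ((one_le_div hε).2 (hε₁.trans hp₁)) using 2
  field_simp

/-- The `p = 0` term is `0⁻¹ = 0`. -/
lemma ENNReal.tsum_int_ofReal_inv_sq :
    ∑' p : ℤ, ENNReal.ofReal (((p : ℝ) ^ 2)⁻¹) = ENNReal.ofReal (π ^ 2 / 3) := by
  rw [ENNReal.tsum_int_eq_zero_add_two_mul_tsum_nat_add_one fun p => by push_cast; rw [neg_sq]]
  have h_zeta : HasSum (fun n : ℕ => (((n : ℝ) + 1) ^ 2)⁻¹) (π ^ 2 / 6) := by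
    simpa using (hasSum_nat_add_iff' 1).2 hasSum_zeta_two
  push_cast
  rw [← ENNReal.ofReal_tsum_of_nonneg (fun n => by positivity) h_zeta.summable, h_zeta.tsum_eq]
  norm_num
  rw [← ENNReal.ofReal_ofNat 2, ← ENNReal.ofReal_mul zero_le_two]
  ring_nf

lemma tsum_ne_zero_ofReal_mul_div_abs_mul_le {a b ε : ℝ} (ha : 0 ≤ a) (hb : 0 ≤ b) (hε : 0 ≤ ε) :
    ∑' p : {p : ℤ // p ≠ 0}, ENNReal.ofReal (a * ε / |(p : ℝ)|) * ENNReal.ofReal (b * ε / |(p : ℝ)|)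
      ≤ ENNReal.ofReal (a * b * (π ^ 2 / 3) * ε ^ 2) := by
  calc ∑' p : {p : ℤ // p ≠ 0}, ENNReal.ofReal (a * ε / |(p : ℝ)|) *
          ENNReal.ofReal (b * ε / |(p : ℝ)|)
      = ∑' p : {p : ℤ // p ≠ 0}, ENNReal.ofReal (a * b * ε ^ 2) *
          ENNReal.ofReal (((p : ℝ) ^ 2)⁻¹) := by
        refine tsum_congr fun p => ?_
        rw [← ENNReal.ofReal_mul (by positivity), ← ENNReal.ofReal_mul (by positivity)]
        congr 1
        field_simp
        rw [sq_abs]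
    _ ≤ ∑' p : ℤ, ENNReal.ofReal (a * b * ε ^ 2) * ENNReal.ofReal (((p : ℝ) ^ 2)⁻¹) :=
        ENNReal.tsum_comp_le_tsum_of_injective Subtype.val_injective _
    _ = ENNReal.ofReal (a * b * (π ^ 2 / 3) * ε ^ 2) := by
        rw [ENNReal.tsum_mul_left, ENNReal.tsum_int_ofReal_inv_sq,
          ← ENNReal.ofReal_mul (by positivity)]
        ring_nf

lemma ENNReal.tsum_subtype_prod_mul_eq_tsum_mul_tsum {α β γ : Type*} (P : γ → Prop)
    (A : γ → α → ENNReal) (B : γ → β → ENNReal) :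
    ∑' k : {k : α × β × γ // P k.2.2}, A k.1.2.2 k.1.1 * B k.1.2.2 k.1.2.1 =
      ∑' c : {c // P c}, (∑' a, A c a) * ∑' b, B c b := by
  let e : {c // P c} × α × β ≃ {k : α × β × γ // P k.2.2} :=
    { toFun x := ⟨(x.2.1, x.2.2, x.1), x.1.2⟩
      invFun k := (⟨k.1.2.2, k.2⟩, k.1.1, k.1.2.1)
      left_inv _ := rfl
      right_inv _ := rfl }
  rw [← e.tsum_eq]
  simp_rw [e, Equiv.coe_fn_mk, ENNReal.tsum_prod', ENNReal.tsum_mul_left, ENNReal.tsum_mul_right]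

lemma Real.tsum_le_of_tsum_ofReal_le {ι : Type*} {f : ι → ℝ} (hf : ∀ i, 0 ≤ f i) {c : ℝ}
    (hc : 0 ≤ c) (h : ∑' i, ENNReal.ofReal (f i) ≤ ENNReal.ofReal c) : ∑' i, f i ≤ c := by
  have h_toReal : ∑' i, f i = (∑' i, ENNReal.ofReal (f i)).toReal := by
    rw [ENNReal.tsum_toReal_eq fun _ => ENNReal.ofReal_ne_top]
    exact tsum_congr fun i => (ENNReal.toReal_ofReal (hf i)).symm
  rw [h_toReal]
  exact ENNReal.toReal_le_of_le_ofReal hc h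

/-- The lattice sum `Σ_{(m,n,p), p≠0} (m²/l₁² + n²/l₂² + p²/ε²)^{-2}` is at most `c ε²`,
with `c` depending only on `l₁, l₂`. -/
theorem lattice_sum_bound (l₁ l₂ : ℝ) (hl₁ : 0 < l₁) (hl₂ : 0 < l₂) :
    ∃ c : ℝ, 0 < c ∧
      ∀ ε : ℝ, 0 < ε → ε ≤ 1 → ε ≤ l₁ → ε ≤ l₂ →
        (∑' k : {k : ℤ × ℤ × ℤ // k.2.2 ≠ 0},
          (((k : ℤ × ℤ × ℤ).1 : ℝ) ^ 2 / l₁ ^ 2 + ((k : ℤ × ℤ × ℤ).2.1 : ℝ) ^ 2 / l₂ ^ 2 +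
              ((k : ℤ × ℤ × ℤ).2.2 : ℝ) ^ 2 / ε ^ 2)⁻¹ ^ 2)
          ≤ c * ε ^ 2 := by
  refine ⟨(1 + 4 * l₁) * (1 + 4 * l₂) * (π ^ 2 / 3), by positivity, fun ε hε hε₁ _ _ => ?_⟩
  refine Real.tsum_le_of_tsum_ofReal_le (fun _ => by positivity) (by positivity) ?_
  set line : ℝ → ℤ → ℤ → ENNReal := fun L p m =>
    ENNReal.ofReal (((m : ℝ) ^ 2 / L ^ 2 + (p : ℝ) ^ 2 / ε ^ 2)⁻¹)
  calc _ ≤ ∑' k : {k : ℤ × ℤ × ℤ // k.2.2 ≠ 0},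
          line l₁ k.1.2.2 k.1.1 * line l₂ k.1.2.2 k.1.2.1 := by
        refine ENNReal.tsum_le_tsum fun k => ?_
        have hp : ((k.1.2.2 : ℤ) : ℝ) ≠ 0 := Int.cast_ne_zero.2 k.2
        rw [← ENNReal.ofReal_mul (by positivity)]
        exact ENNReal.ofReal_le_ofReal
          (inv_add_add_sq_le_inv_mul_inv (by positivity) (by positivity) (by positivity))
    _ = ∑' p : {p : ℤ // p ≠ 0}, (∑' m, line l₁ p m) * ∑' n, line l₂ p n :=
        ENNReal.tsum_subtype_prod_mul_eq_tsum_mul_tsum (· ≠ 0) (line l₁) (line l₂)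
    _ ≤ ∑' p : {p : ℤ // p ≠ 0}, ENNReal.ofReal ((1 + 4 * l₁) * ε / |(p : ℝ)|) *
          ENNReal.ofReal ((1 + 4 * l₂) * ε / |(p : ℝ)|) :=
        ENNReal.tsum_le_tsum fun p => mul_le_mul'
          (tsum_int_ofReal_inv_sq_div_add_sq_div_le hl₁ hε hε₁ p.2)
          (tsum_int_ofReal_inv_sq_div_add_sq_div_le hl₂ hε hε₁ p.2)
    _ ≤ _ := tsum_ne_zero_ofReal_mul_div_abs_mul_le (by positivity) (by positivity) hε.le
end

section
/- Let r be a smooth two-dimensional divergence-free vector field on [0,l₁]×[0,l₂] with periodic boundary conditions. Then ∫_{[0,l₁]×[0,l₂]} Δr · (r·∇r) dA = 0 (the 'enstrophy miracle'). -/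
open MeasureTheory

/-- Partial derivative in the first coordinate. -/
noncomputable def pdx (f : ℝ × ℝ → ℝ) (p : ℝ × ℝ) : ℝ := fderiv ℝ f p (1, 0)

/-- Partial derivative in the second coordinate. -/
noncomputable def pdy (f : ℝ × ℝ → ℝ) (p : ℝ × ℝ) : ℝ := fderiv ℝ f p (0, 1)

/-- Laplacian on `ℝ²`. -/
noncomputable def lap (f : ℝ × ℝ → ℝ) (p : ℝ × ℝ) : ℝ := pdx (pdx f) p + pdy (pdy f) p

-- basic calculus rules
lemma pdx_add {f g : ℝ × ℝ → ℝ} {p} (hf : DifferentiableAt ℝ f p) (hg : DifferentiableAt ℝ g p) :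
    pdx (fun q => f q + g q) p = pdx f p + pdx g p := by
  simp [pdx, fderiv_fun_add hf hg]

lemma pdx_sub {f g : ℝ × ℝ → ℝ} {p} (hf : DifferentiableAt ℝ f p) (hg : DifferentiableAt ℝ g p) :
    pdx (fun q => f q - g q) p = pdx f p - pdx g p := by
  simp [pdx, fderiv_fun_sub hf hg]

lemma pdx_mul {f g : ℝ × ℝ → ℝ} {p} (hf : DifferentiableAt ℝ f p) (hg : DifferentiableAt ℝ g p) :
    pdx (fun q => f q * g q) p = f p * pdx g p + g p * pdx f p := by
  simp [pdx, fderiv_fun_mul hf hg]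

lemma pdx_const_mul {f : ℝ × ℝ → ℝ} {p} (hf : DifferentiableAt ℝ f p) (c : ℝ) :
    pdx (fun q => c * f q) p = c * pdx f p := by
  simp [pdx, fderiv_const_mul hf]

-- contDiff of partial derivatives
lemma contDiff_pdx {f : ℝ × ℝ → ℝ} (hf : ContDiff ℝ (⊤ : ℕ∞) f) : ContDiff ℝ (⊤ : ℕ∞) (pdx f) :=
  (hf.fderiv_right (by simp)).clm_apply contDiff_const

lemma contDiff_pdy {f : ℝ × ℝ → ℝ} (hf : ContDiff ℝ (⊤ : ℕ∞) f) : ContDiff ℝ (⊤ : ℕ∞) (pdy f) :=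
  (hf.fderiv_right (by simp)).clm_apply contDiff_const

-- Clairaut
lemma pdx_pdy_comm {f : ℝ × ℝ → ℝ} (hf : ContDiff ℝ (⊤ : ℕ∞) f) (p : ℝ × ℝ) :
    pdx (pdy f) p = pdy (pdx f) p := by
  have hd : DifferentiableAt ℝ (fderiv ℝ f) p :=
    ((hf.fderiv_right (m := (⊤ : ℕ∞)) (by simp)).differentiable (by simp)).differentiableAt
  have h2 := second_derivative_symmetric (f := f) (f' := fderiv ℝ f)
    (f'' := fderiv ℝ (fderiv ℝ f) p)
    (fun y => ((hf.differentiable (by simp)) y).hasFDerivAt) hd.hasFDerivAt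
  have e1 : pdx (pdy f) p = fderiv ℝ (fderiv ℝ f) p (1,0) (0,1) := by
    have : pdy f = fun q => (fderiv ℝ f q) (0,1) := rfl
    rw [pdx, this, fderiv_clm_apply hd (differentiableAt_const _)]
    simp
  have e2 : pdy (pdx f) p = fderiv ℝ (fderiv ℝ f) p (0,1) (1,0) := by
    have : pdx f = fun q => (fderiv ℝ f q) (1,0) := rfl
    rw [pdy, this, fderiv_clm_apply hd (differentiableAt_const _)]
    simp
  rw [e1, e2, h2]

lemma pdy_add {f g : ℝ × ℝ → ℝ} {p} (hf : DifferentiableAt ℝ f p) (hg : DifferentiableAt ℝ g p) :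
    pdy (fun q => f q + g q) p = pdy f p + pdy g p := by
  simp [pdy, fderiv_fun_add hf hg]

lemma pdy_sub {f g : ℝ × ℝ → ℝ} {p} (hf : DifferentiableAt ℝ f p) (hg : DifferentiableAt ℝ g p) :
    pdy (fun q => f q - g q) p = pdy f p - pdy g p := by
  simp [pdy, fderiv_fun_sub hf hg]

lemma pdy_mul {f g : ℝ × ℝ → ℝ} {p} (hf : DifferentiableAt ℝ f p) (hg : DifferentiableAt ℝ g p) :
    pdy (fun q => f q * g q) p = f p * pdy g p + g p * pdy f p := by
  simp [pdy, fderiv_fun_mul hf hg]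

lemma pdy_const_mul {f : ℝ × ℝ → ℝ} {p} (hf : DifferentiableAt ℝ f p) (c : ℝ) :
    pdy (fun q => c * f q) p = c * pdy f p := by
  simp [pdy, fderiv_const_mul hf]

/-- fderiv of a periodic function is periodic. -/
lemma fderiv_shift {f : ℝ × ℝ → ℝ} (hf : Differentiable ℝ f) (c : ℝ × ℝ)
    (h : ∀ q : ℝ × ℝ, f (q + c) = f q) (p : ℝ × ℝ) :
    fderiv ℝ f (p + c) = fderiv ℝ f p := by
  have h1 : HasFDerivAt (fun q : ℝ × ℝ => f (q + c)) (fderiv ℝ f (p + c)) p := by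
    have := (hf (p + c)).hasFDerivAt.comp p ((hasFDerivAt_id p).add_const c)
    simpa [Function.comp_def] using this
  have h2 : HasFDerivAt f (fderiv ℝ f (p + c)) p := by
    have : (fun q : ℝ × ℝ => f (q + c)) = f := funext h
    rwa [this] at h1
  rw [h2.fderiv]


lemma pdx_div_const {f : ℝ × ℝ → ℝ} {p} (hf : DifferentiableAt ℝ f p) (c : ℝ) :
    pdx (fun q => f q / c) p = pdx f p / c := by
  simp only [div_eq_mul_inv]
  simp [pdx, fderiv_mul_const hf, mul_comm]

lemma pdy_div_const {f : ℝ × ℝ → ℝ} {p} (hf : DifferentiableAt ℝ f p) (c : ℝ) :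
    pdy (fun q => f q / c) p = pdy f p / c := by
  simp only [div_eq_mul_inv]
  simp [pdy, fderiv_mul_const hf, mul_comm]

noncomputable def vort (r₁ r₂ : ℝ × ℝ → ℝ) : ℝ × ℝ → ℝ := fun q => pdx r₂ q - pdy r₁ q

noncomputable def Fflux (r₁ r₂ : ℝ × ℝ → ℝ) : ℝ × ℝ → ℝ := fun q =>
  (r₁ q * (vort r₁ r₂ q * vort r₁ r₂ q)
    - (r₁ q * r₁ q + r₂ q * r₂ q) * pdy (vort r₁ r₂) q) / 2

noncomputable def Gflux (r₁ r₂ : ℝ × ℝ → ℝ) : ℝ × ℝ → ℝ := fun q =>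
  (r₂ q * (vort r₁ r₂ q * vort r₁ r₂ q)
    + (r₁ q * r₁ q + r₂ q * r₂ q) * pdx (vort r₁ r₂) q) / 2

lemma contDiff_vort {r₁ r₂ : ℝ × ℝ → ℝ} (hr₁ : ContDiff ℝ (⊤ : ℕ∞) r₁) (hr₂ : ContDiff ℝ (⊤ : ℕ∞) r₂) :
    ContDiff ℝ (⊤ : ℕ∞) (vort r₁ r₂) := (contDiff_pdx hr₂).sub (contDiff_pdy hr₁)

lemma contDiff_Fflux {r₁ r₂ : ℝ × ℝ → ℝ} (hr₁ : ContDiff ℝ (⊤ : ℕ∞) r₁) (hr₂ : ContDiff ℝ (⊤ : ℕ∞) r₂) :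
    ContDiff ℝ (⊤ : ℕ∞) (Fflux r₁ r₂) := by
  have hw := contDiff_vort hr₁ hr₂
  exact ((hr₁.mul (hw.mul hw)).sub
    (((hr₁.mul hr₁).add (hr₂.mul hr₂)).mul (contDiff_pdy hw))).div_const 2

lemma contDiff_Gflux {r₁ r₂ : ℝ × ℝ → ℝ} (hr₁ : ContDiff ℝ (⊤ : ℕ∞) r₁) (hr₂ : ContDiff ℝ (⊤ : ℕ∞) r₂) :
    ContDiff ℝ (⊤ : ℕ∞) (Gflux r₁ r₂) := by
  have hw := contDiff_vort hr₁ hr₂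
  exact ((hr₂.mul (hw.mul hw)).add
    (((hr₁.mul hr₁).add (hr₂.mul hr₂)).mul (contDiff_pdx hw))).div_const 2

/-- The key pointwise identity. -/
lemma key_identity {r₁ r₂ : ℝ × ℝ → ℝ} (hr₁ : ContDiff ℝ (⊤ : ℕ∞) r₁) (hr₂ : ContDiff ℝ (⊤ : ℕ∞) r₂)
    (hdiv : ∀ p : ℝ × ℝ, pdx r₁ p + pdy r₂ p = 0) (p : ℝ × ℝ) :
    lap r₁ p * (r₁ p * pdx r₁ p + r₂ p * pdy r₁ p) +
      lap r₂ p * (r₁ p * pdx r₂ p + r₂ p * pdy r₂ p)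
      = pdx (Fflux r₁ r₂) p + pdy (Gflux r₁ r₂) p := by
  have hw : ContDiff ℝ (⊤ : ℕ∞) (vort r₁ r₂) := contDiff_vort hr₁ hr₂
  have d1 : Differentiable ℝ r₁ := hr₁.differentiable (by simp)
  have d2 : Differentiable ℝ r₂ := hr₂.differentiable (by simp)
  have dw : Differentiable ℝ (vort r₁ r₂) := hw.differentiable (by simp)
  have dwx : Differentiable ℝ (pdx (vort r₁ r₂)) := (contDiff_pdx hw).differentiable (by simp)
  have dwy : Differentiable ℝ (pdy (vort r₁ r₂)) := (contDiff_pdy hw).differentiable (by simp)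
  have d1x : Differentiable ℝ (pdx r₁) := (contDiff_pdx hr₁).differentiable (by simp)
  have d1y : Differentiable ℝ (pdy r₁) := (contDiff_pdy hr₁).differentiable (by simp)
  have d2x : Differentiable ℝ (pdx r₂) := (contDiff_pdx hr₂).differentiable (by simp)
  have d2y : Differentiable ℝ (pdy r₂) := (contDiff_pdy hr₂).differentiable (by simp)
  have dw2 : DifferentiableAt ℝ (fun q => vort r₁ r₂ q * vort r₁ r₂ q) p := (dw p).mul (dw p)
  have dsq : DifferentiableAt ℝ (fun q => r₁ q * r₁ q + r₂ q * r₂ q) p :=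
    ((d1 p).mul (d1 p)).add ((d2 p).mul (d2 p))
  have dA : DifferentiableAt ℝ (fun q => r₁ q * (vort r₁ r₂ q * vort r₁ r₂ q)) p := (d1 p).mul dw2
  have dA2 : DifferentiableAt ℝ (fun q => r₂ q * (vort r₁ r₂ q * vort r₁ r₂ q)) p := (d2 p).mul dw2
  have dB : DifferentiableAt ℝ (fun q => (r₁ q * r₁ q + r₂ q * r₂ q) * pdy (vort r₁ r₂) q) p :=
    dsq.mul (dwy p)
  have dB2 : DifferentiableAt ℝ (fun q => (r₁ q * r₁ q + r₂ q * r₂ q) * pdx (vort r₁ r₂) q) p :=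
    dsq.mul (dwx p)
  -- expand the divergence of the flux
  unfold Fflux Gflux
  rw [pdx_div_const (dA.fun_sub dB) 2, pdy_div_const (dA2.fun_add dB2) 2]
  rw [pdx_sub dA dB, pdy_add dA2 dB2]
  rw [pdx_mul (d1 p) dw2, pdx_mul dsq (dwy p), pdy_mul (d2 p) dw2, pdy_mul dsq (dwx p)]
  rw [pdx_mul (dw p) (dw p), pdy_mul (dw p) (dw p)]
  rw [pdx_add ((d1 p).fun_mul (d1 p)) ((d2 p).fun_mul (d2 p)),
      pdy_add ((d1 p).fun_mul (d1 p)) ((d2 p).fun_mul (d2 p))]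
  rw [pdx_mul (d1 p) (d1 p), pdx_mul (d2 p) (d2 p), pdy_mul (d1 p) (d1 p), pdy_mul (d2 p) (d2 p)]
  -- expand vort and its partials
  have hv : vort r₁ r₂ p = pdx r₂ p - pdy r₁ p := rfl
  have hvx : pdx (vort r₁ r₂) p = pdx (pdx r₂) p - pdx (pdy r₁) p := pdx_sub (d2x p) (d1y p)
  have hvy : pdy (vort r₁ r₂) p = pdy (pdx r₂) p - pdy (pdy r₁) p := pdy_sub (d2x p) (d1y p)
  -- third-order symmetry
  have hcomm : pdx (pdy (vort r₁ r₂)) p = pdy (pdx (vort r₁ r₂)) p := pdx_pdy_comm hw p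
  -- divergence-free constraints
  have hc0 : pdy r₂ p = -pdx r₁ p := by linarith [hdiv p]
  have hzero : (fun q => pdx r₁ q + pdy r₂ q) = (fun _ : ℝ × ℝ => (0:ℝ)) := funext hdiv
  have hDx : pdx (pdx r₁) p + pdx (pdy r₂) p = 0 := by
    have h := pdx_add (p := p) (d1x p) (d2y p)
    rw [hzero] at h
    simpa [pdx] using h.symm
  have hDy : pdy (pdx r₁) p + pdy (pdy r₂) p = 0 := by
    have h := pdy_add (p := p) (d1x p) (d2y p)
    rw [hzero] at h
    simpa [pdy] using h.symm
  have hcl1 : pdx (pdy r₁) p = pdy (pdx r₁) p := pdx_pdy_comm hr₁ p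
  have hcl2 : pdx (pdy r₂) p = pdy (pdx r₂) p := pdx_pdy_comm hr₂ p
  have e1 : pdx (pdx r₁) p = -pdy (pdx r₂) p := by rw [← hcl2]; linarith
  have e2 : pdy (pdx r₁) p = -pdy (pdy r₂) p := by linarith
  unfold lap
  rw [hv, hvx, hvy, hcomm, hcl1, e1, e2, hc0]
  ring

lemma pdx_shift {f : ℝ × ℝ → ℝ} (hf : Differentiable ℝ f) (c : ℝ × ℝ)
    (h : ∀ q : ℝ × ℝ, f (q + c) = f q) (q : ℝ × ℝ) : pdx f (q + c) = pdx f q := by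
  rw [pdx, pdx, fderiv_shift hf c h]

lemma pdy_shift {f : ℝ × ℝ → ℝ} (hf : Differentiable ℝ f) (c : ℝ × ℝ)
    (h : ∀ q : ℝ × ℝ, f (q + c) = f q) (q : ℝ × ℝ) : pdy f (q + c) = pdy f q := by
  rw [pdy, pdy, fderiv_shift hf c h]

/-- The "enstrophy miracle": for a smooth periodic divergence-free 2D vector field
`r = (r₁, r₂)`, `∫ Δr · (r·∇r) dA = 0`. -/
theorem enstrophy_miracle (l₁ l₂ : ℝ) (hl₁ : 0 < l₁) (hl₂ : 0 < l₂)
    (r₁ r₂ : ℝ × ℝ → ℝ)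
    (hr₁ : ContDiff ℝ (⊤ : ℕ∞) r₁) (hr₂ : ContDiff ℝ (⊤ : ℕ∞) r₂)
    (hper₁x : ∀ x y : ℝ, r₁ (x + l₁, y) = r₁ (x, y))
    (hper₁y : ∀ x y : ℝ, r₁ (x, y + l₂) = r₁ (x, y))
    (hper₂x : ∀ x y : ℝ, r₂ (x + l₁, y) = r₂ (x, y))
    (hper₂y : ∀ x y : ℝ, r₂ (x, y + l₂) = r₂ (x, y))
    (hdiv : ∀ p : ℝ × ℝ, pdx r₁ p + pdy r₂ p = 0) :
    ∫ p in Set.Icc (0 : ℝ) l₁ ×ˢ Set.Icc (0 : ℝ) l₂,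
      (lap r₁ p * (r₁ p * pdx r₁ p + r₂ p * pdy r₁ p) +
        lap r₂ p * (r₁ p * pdx r₂ p + r₂ p * pdy r₂ p)) = 0 := by
  set c₁ : ℝ × ℝ := (l₁, 0) with hc₁
  set c₂ : ℝ × ℝ := (0, l₂) with hc₂
  have hq₁ : ∀ q : ℝ × ℝ, q + c₁ = (q.1 + l₁, q.2) := by intro q; ext <;> simp [hc₁]
  have hq₂ : ∀ q : ℝ × ℝ, q + c₂ = (q.1, q.2 + l₂) := by intro q; ext <;> simp [hc₂]
  have hr₁s₁ : ∀ q : ℝ × ℝ, r₁ (q + c₁) = r₁ q := fun q => by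
    rw [hq₁ q, hper₁x q.1 q.2]
  have hr₁s₂ : ∀ q : ℝ × ℝ, r₁ (q + c₂) = r₁ q := fun q => by
    rw [hq₂ q, hper₁y q.1 q.2]
  have hr₂s₁ : ∀ q : ℝ × ℝ, r₂ (q + c₁) = r₂ q := fun q => by
    rw [hq₁ q, hper₂x q.1 q.2]
  have hr₂s₂ : ∀ q : ℝ × ℝ, r₂ (q + c₂) = r₂ q := fun q => by
    rw [hq₂ q, hper₂y q.1 q.2]
  have d1 : Differentiable ℝ r₁ := hr₁.differentiable (by simp)
  have d2 : Differentiable ℝ r₂ := hr₂.differentiable (by simp)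
  have hw : ContDiff ℝ (⊤ : ℕ∞) (vort r₁ r₂) := contDiff_vort hr₁ hr₂
  have dw : Differentiable ℝ (vort r₁ r₂) := hw.differentiable (by simp)
  have hws₁ : ∀ q : ℝ × ℝ, vort r₁ r₂ (q + c₁) = vort r₁ r₂ q := fun q => by
    unfold vort
    rw [pdx_shift d2 c₁ hr₂s₁, pdy_shift d1 c₁ hr₁s₁]
  have hws₂ : ∀ q : ℝ × ℝ, vort r₁ r₂ (q + c₂) = vort r₁ r₂ q := fun q => by
    unfold vort
    rw [pdx_shift d2 c₂ hr₂s₂, pdy_shift d1 c₂ hr₁s₂]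
  have hF : ContDiff ℝ (⊤ : ℕ∞) (Fflux r₁ r₂) := contDiff_Fflux hr₁ hr₂
  have hG : ContDiff ℝ (⊤ : ℕ∞) (Gflux r₁ r₂) := contDiff_Gflux hr₁ hr₂
  have hFs₁ : ∀ q : ℝ × ℝ, Fflux r₁ r₂ (q + c₁) = Fflux r₁ r₂ q := fun q => by
    unfold Fflux
    rw [hr₁s₁, hr₂s₁, hws₁, pdy_shift dw c₁ hws₁]
  have hGs₂ : ∀ q : ℝ × ℝ, Gflux r₁ r₂ (q + c₂) = Gflux r₁ r₂ q := fun q => by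
    unfold Gflux
    rw [hr₁s₂, hr₂s₂, hws₂, pdx_shift dw c₂ hws₂]
  -- continuity of the divergence integrand
  have hcont : Continuous fun p : ℝ × ℝ =>
      fderiv ℝ (Fflux r₁ r₂) p (1, 0) + fderiv ℝ (Gflux r₁ r₂) p (0, 1) :=
    ((contDiff_pdx hF).continuous).add ((contDiff_pdy hG).continuous)
  have hIcc : Set.uIcc (0:ℝ) l₁ = Set.Icc 0 l₁ := Set.uIcc_of_le hl₁.le
  have hIcc' : Set.uIcc (0:ℝ) l₂ = Set.Icc 0 l₂ := Set.uIcc_of_le hl₂.le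
  have hInt : IntegrableOn
      (fun p : ℝ × ℝ => fderiv ℝ (Fflux r₁ r₂) p (1, 0) + fderiv ℝ (Gflux r₁ r₂) p (0, 1))
      (Set.Icc 0 l₁ ×ˢ Set.Icc 0 l₂) :=
    hcont.continuousOn.integrableOn_compact (isCompact_Icc.prod isCompact_Icc)
  have hdivthm := integral2_divergence_prod_of_hasFDerivAt_off_countable
    (Fflux r₁ r₂) (Gflux r₁ r₂)
    (fun p => fderiv ℝ (Fflux r₁ r₂) p) (fun p => fderiv ℝ (Gflux r₁ r₂) p)
    0 0 l₁ l₂ ∅ Set.countable_empty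
    (hF.continuous.continuousOn) (hG.continuous.continuousOn)
    (fun x _ => ((hF.differentiable (by simp)) x).hasFDerivAt)
    (fun x _ => ((hG.differentiable (by simp)) x).hasFDerivAt)
    (by rwa [hIcc, hIcc'])
  -- boundary terms vanish by periodicity
  have hFb : ∀ y : ℝ, Fflux r₁ r₂ (l₁, y) = Fflux r₁ r₂ (0, y) := fun y => by
    have := hFs₁ (0, y)
    simpa [hc₁, Prod.ext_iff] using this
  have hGb : ∀ x : ℝ, Gflux r₁ r₂ (x, l₂) = Gflux r₁ r₂ (x, 0) := fun x => by
    have := hGs₂ (x, 0)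
    simpa [hc₂, Prod.ext_iff] using this
  have hbd : (∫ x in (0:ℝ)..l₁, ∫ y in (0:ℝ)..l₂,
      fderiv ℝ (Fflux r₁ r₂) (x, y) (1, 0) + fderiv ℝ (Gflux r₁ r₂) (x, y) (0, 1)) = 0 := by
    rw [hdivthm]
    simp [hFb, hGb]
  -- put it together
  calc ∫ p in Set.Icc (0 : ℝ) l₁ ×ˢ Set.Icc (0 : ℝ) l₂,
      (lap r₁ p * (r₁ p * pdx r₁ p + r₂ p * pdy r₁ p) +
        lap r₂ p * (r₁ p * pdx r₂ p + r₂ p * pdy r₂ p))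
      = ∫ p in Set.Icc (0 : ℝ) l₁ ×ˢ Set.Icc (0 : ℝ) l₂,
          (fderiv ℝ (Fflux r₁ r₂) p (1, 0) + fderiv ℝ (Gflux r₁ r₂) p (0, 1)) := by
        refine setIntegral_congr_fun (measurableSet_Icc.prod measurableSet_Icc) ?_
        intro p _
        exact key_identity hr₁ hr₂ hdiv p
    _ = ∫ x in Set.Icc (0:ℝ) l₁, ∫ y in Set.Icc (0:ℝ) l₂,
          (fderiv ℝ (Fflux r₁ r₂) (x, y) (1, 0) + fderiv ℝ (Gflux r₁ r₂) (x, y) (0, 1)) :=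
        setIntegral_prod _ hInt
    _ = ∫ x in (0:ℝ)..l₁, ∫ y in (0:ℝ)..l₂,
          (fderiv ℝ (Fflux r₁ r₂) (x, y) (1, 0) + fderiv ℝ (Gflux r₁ r₂) (x, y) (0, 1)) := by
        rw [intervalIntegral.integral_of_le hl₁.le, integral_Icc_eq_integral_Ioc]
        refine setIntegral_congr_fun measurableSet_Ioc (fun x _ => ?_)
        rw [intervalIntegral.integral_of_le hl₂.le, integral_Icc_eq_integral_Ioc]
    _ = 0 := hbd
end

section
/- Let φ,ψ,θ:[0,∞)→[0,∞) be differentiable, and suppose there are constants c₇,c₉,c₁₀,c₁₉,K>0 and F,M>0 such that φ(t)≤KM and θ(t)≤KM for all t, ψ(0)≤M, and ∂_t ψ² + c₁₉ ψ² ≤ c₇ ε^{-1} M² (F² − ∂_t θ²) + c₇ F² for all t. Then there is a constant C depending only on c₇,c₁₉,K such that ψ(t) ≤ C max{ε^{-1/2} M², M} for all t≥0 (assuming F≤M). -/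
/-!
Adding `a θ²` with `a = c₇ ε⁻¹ M²` to `ψ²` absorbs the term `-a ∂ₜθ²` (this is the
integration by parts of the paper): the energy `u = ψ² + a θ²` satisfies
`u' + c₁₉ u ≤ a F² + c₇ F² + c₁₉ a K² M²`, so by Grönwall `u` never exceeds the larger of
`u 0` and the equilibrium level of this inequality. Both are `O(max{ε^{-1/2} M², M}²)`.
-/

open Real Set

theorem le_max_of_deriv_add_mul_le {u : ℝ → ℝ} {c D : ℝ} (hc : 0 ≤ c)
    (hu : ∀ t, 0 ≤ t → DifferentiableAt ℝ u t)
    (hineq : ∀ t, 0 ≤ t → deriv u t + c * u t ≤ c * D) {t : ℝ} (ht : 0 ≤ t) :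
    u t ≤ max (u 0) D := by
  let v : ℝ → ℝ := fun s => (u s - D) * exp (c * s)
  have hv : ∀ s, 0 ≤ s → HasDerivAt v ((deriv u s + c * u s - c * D) * exp (c * s)) s :=
    fun s hs => (((hu s hs).hasDerivAt.sub_const D).fun_mul
      ((hasDerivAt_id' s).const_mul c).exp).congr_deriv (by ring)
  have hanti : AntitoneOn v (Ici 0) := by
    refine antitoneOn_of_hasDerivWithinAt_nonpos (convex_Ici 0)
      (fun s hs => (hv s hs).continuousAt.continuousWithinAt)
      (fun s hs => (hv s (interior_subset hs : 0 ≤ s)).hasDerivWithinAt) fun s hs => ?_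
    have hs : 0 ≤ s := interior_subset hs
    exact mul_nonpos_of_nonpos_of_nonneg (by linarith [hineq s hs]) (exp_pos _).le
  have hvt : (u t - D) * exp (c * t) ≤ u 0 - D := by
    simpa [v] using hanti self_mem_Ici ht ht
  have hexp : 1 ≤ exp (c * t) := one_le_exp (mul_nonneg hc ht)
  rcases le_total (u t) D with h | h
  · exact le_max_of_le_right h
  · have := le_mul_of_one_le_right (sub_nonneg.2 h) hexp
    exact le_max_of_le_left (by linarith)

theorem sq_le_max_of_deriv_sq_add_mul_sq_le {ψ θ : ℝ → ℝ} {a c B G H : ℝ} (ha : 0 ≤ a)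
    (hc : 0 < c)
    (hdiff : ∀ t, 0 ≤ t → DifferentiableAt ℝ (fun s => ψ s ^ 2) t ∧
      DifferentiableAt ℝ (fun s => θ s ^ 2) t)
    (hθ : ∀ t, 0 ≤ t → θ t ^ 2 ≤ B)
    (hineq : ∀ t, 0 ≤ t → deriv (fun s => ψ s ^ 2) t + c * ψ t ^ 2 ≤
      a * (G - deriv (fun s => θ s ^ 2) t) + H) {t : ℝ} (ht : 0 ≤ t) :
    ψ t ^ 2 ≤ max (ψ 0 ^ 2 + a * θ 0 ^ 2) ((a * G + H) / c + a * B) := by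
  set u : ℝ → ℝ := fun s => ψ s ^ 2 + a * θ s ^ 2
  have hu : ∀ s, 0 ≤ s →
      HasDerivAt u (deriv (fun r => ψ r ^ 2) s + a * deriv (fun r => θ r ^ 2) s) s :=
    fun s hs => (hdiff s hs).1.hasDerivAt.add ((hdiff s hs).2.hasDerivAt.const_mul a)
  have hle : ψ t ^ 2 ≤ u t := le_add_of_nonneg_right (mul_nonneg ha (sq_nonneg _))
  refine hle.trans (le_max_of_deriv_add_mul_le hc.le (fun s hs => (hu s hs).differentiableAt)
    (fun s hs => ?_) ht)
  rw [(hu s hs).deriv, mul_add c ((a * G + H) / c), mul_div_cancel₀ _ hc.ne']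
  nlinarith [hineq s hs, mul_le_mul_of_nonneg_left (hθ s hs) (mul_nonneg hc.le ha)]

theorem inv_mul_pow_four_le_sq_max {ε : ℝ} (hε : 0 < ε) (M : ℝ) :
    ε⁻¹ * M ^ 4 ≤ max (ε ^ (-(1 : ℝ) / 2) * M ^ 2) M ^ 2 := by
  have hpow : (ε ^ (-(1 : ℝ) / 2)) ^ 2 = ε⁻¹ := by
    rw [← rpow_natCast, ← rpow_mul hε.le]
    norm_num [rpow_neg_one]
  calc ε⁻¹ * M ^ 4 = (ε ^ (-(1 : ℝ) / 2) * M ^ 2) ^ 2 := by rw [mul_pow, hpow]; ring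
    _ ≤ _ := pow_le_pow_left₀ (by positivity) (le_max_left _ _) 2

theorem psi_bound_general (c₇ c₁₉ K : ℝ) (hc₇ : 0 < c₇) (hc₁₉ : 0 < c₁₉) :
    ∃ C : ℝ, 0 < C ∧
      ∀ (ε F M : ℝ) (φ ψ θ : ℝ → ℝ),
        0 < ε → ε < 1 → 0 < F → 0 < M → F ≤ M →
        (∀ t : ℝ, 0 ≤ t → 0 ≤ φ t ∧ 0 ≤ ψ t ∧ 0 ≤ θ t) →
        (∀ t : ℝ, 0 ≤ t → DifferentiableAt ℝ (fun s => ψ s ^ 2) t ∧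
          DifferentiableAt ℝ (fun s => θ s ^ 2) t) →
        (∀ t : ℝ, 0 ≤ t → φ t ≤ K * M ∧ θ t ≤ K * M) →
        ψ 0 ≤ M →
        (∀ t : ℝ, 0 ≤ t →
          deriv (fun s => ψ s ^ 2) t + c₁₉ * ψ t ^ 2 ≤
            c₇ * ε⁻¹ * M ^ 2 * (F ^ 2 - deriv (fun s => θ s ^ 2) t) + c₇ * F ^ 2) →
        ∀ t : ℝ, 0 ≤ t →
          ψ t ≤ C * max (ε ^ (-(1 : ℝ) / 2) * M ^ 2) M := by
  let C₀ := 1 + c₇ * K ^ 2 + 2 * c₇ / c₁₉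
  refine ⟨√C₀, by positivity, ?_⟩
  intro ε F M φ ψ θ hε _ hF hM hFM hnn hdiff hbd hψ0 hineq t ht
  set X := max (ε ^ (-(1 : ℝ) / 2) * M ^ 2) M
  have hθ : ∀ s, 0 ≤ s → θ s ^ 2 ≤ K ^ 2 * M ^ 2 := fun s hs => by
    rw [← mul_pow]; exact pow_le_pow_left₀ (hnn s hs).2.2 (hbd s hs).2 2
  have hψt := sq_le_max_of_deriv_sq_add_mul_sq_le (by positivity) hc₁₉ hdiff hθ hineq ht
  have hε4 : ε⁻¹ * M ^ 4 ≤ X ^ 2 := inv_mul_pow_four_le_sq_max hε M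
  have hM2 : M ^ 2 ≤ X ^ 2 := pow_le_pow_left₀ hM.le (le_max_right _ _) 2
  have hF2 : F ^ 2 ≤ M ^ 2 := pow_le_pow_left₀ hF.le hFM 2
  have hψ02 : ψ 0 ^ 2 ≤ M ^ 2 := pow_le_pow_left₀ (hnn 0 le_rfl).2.1 hψ0 2
  have hθ0 : c₇ * ε⁻¹ * M ^ 2 * θ 0 ^ 2 ≤ c₇ * K ^ 2 * X ^ 2 := by
    have := mul_le_mul_of_nonneg_left (hθ 0 le_rfl) (by positivity : 0 ≤ c₇ * ε⁻¹ * M ^ 2)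
    nlinarith [mul_le_mul_of_nonneg_left hε4 (by positivity : 0 ≤ c₇ * K ^ 2)]
  have hequil : (c₇ * ε⁻¹ * M ^ 2 * F ^ 2 + c₇ * F ^ 2) / c₁₉ ≤ 2 * c₇ / c₁₉ * X ^ 2 := by
    rw [div_mul_eq_mul_div, div_le_div_iff_of_pos_right hc₁₉]
    nlinarith [mul_le_mul_of_nonneg_left hF2 (by positivity : 0 ≤ c₇ * ε⁻¹ * M ^ 2)]
  have hsq : ψ t ^ 2 ≤ (√C₀ * X) ^ 2 := by
    rw [mul_pow, sq_sqrt (by positivity)]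
    have hequil_nonneg : 0 ≤ 2 * c₇ / c₁₉ * X ^ 2 := by positivity
    refine hψt.trans (max_le ?_ ?_) <;> nlinarith [sq_nonneg X, mul_nonneg hc₇.le (sq_nonneg K)]
  exact le_of_pow_le_pow_left₀ two_ne_zero (by positivity) hsq

/-- Estimate for `ψ` from the differential inequality
`∂_t ψ² + c₁₉ ψ² ≤ c₇ ε⁻¹ M² (F² − ∂_t θ²) + c₇ F²`, given uniform bounds
`φ ≤ KM`, `θ ≤ KM`, `ψ(0) ≤ M`, `F ≤ M`:
`ψ(t) ≤ C max{ε^{-1/2} M², M}` with `C` depending only on `c₇, c₁₉, K`. -/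
theorem psi_bound (c₇ c₁₉ K : ℝ) (hc₇ : 0 < c₇) (hc₁₉ : 0 < c₁₉) (hK : 0 < K) :
    ∃ C : ℝ, 0 < C ∧
      ∀ (ε F M : ℝ) (φ ψ θ : ℝ → ℝ),
        0 < ε → ε < 1 → 0 < F → 0 < M → F ≤ M →
        (∀ t : ℝ, 0 ≤ t → 0 ≤ φ t ∧ 0 ≤ ψ t ∧ 0 ≤ θ t) →
        (∀ t : ℝ, 0 ≤ t → DifferentiableAt ℝ (fun s => ψ s ^ 2) t ∧
          DifferentiableAt ℝ (fun s => θ s ^ 2) t) →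
        (∀ t : ℝ, 0 ≤ t → φ t ≤ K * M ∧ θ t ≤ K * M) →
        ψ 0 ≤ M →
        (∀ t : ℝ, 0 ≤ t →
          deriv (fun s => ψ s ^ 2) t + c₁₉ * ψ t ^ 2 ≤
            c₇ * ε⁻¹ * M ^ 2 * (F ^ 2 - deriv (fun s => θ s ^ 2) t) + c₇ * F ^ 2) →
        ∀ t : ℝ, 0 ≤ t →
          ψ t ≤ C * max (ε ^ (-(1 : ℝ) / 2) * M ^ 2) M :=
  psi_bound_general c₇ c₁₉ K hc₇ hc₁₉
end
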